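/- Let A ∈ ℝ^{n×d} with spectral norm ‖A‖ ≤ R for some R ≥ 4, and let x, y ∈ ℝ^d satisfy ‖x‖_2 ≤ R, ‖y‖_2 ≤ R and ‖A(x − y)‖_∞ < 0.01. Then ‖exp(Ax) − exp(Ay)‖_2 ≤ 2 √n R exp(R²) · ‖x − y‖_2, where exp is applied entrywise. -/
import Mathlib


open Matrix

/-- The Euclidean (ℓ2) norm of a vector in ℝ^n. -/
noncomputable def l2norm {n : ℕ} (u : Fin n → ℝ) : ℝ := Real.sqrt (∑ i, u i ^ 2)

/-- The supremum (ℓ∞) norm of a vector in ℝ^n. -/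
noncomputable def linfNorm {n : ℕ} (u : Fin n → ℝ) : ℝ := ⨆ i, |u i|

/-- The spectral (ℓ2 operator) norm of a matrix. -/
noncomputable def specNorm {n d : ℕ} (A : Matrix (Fin n) (Fin d) ℝ) : ℝ :=
  ‖LinearMap.toContinuousLinearMap (Matrix.toEuclideanLin A)‖

lemma l2norm_eq {n : ℕ} (u : Fin n → ℝ) :
    l2norm u = ‖(WithLp.equiv 2 (Fin n → ℝ)).symm u‖ := by
  simp [l2norm, EuclideanSpace.norm_eq, Real.norm_eq_abs, sq_abs]

lemma l2norm_nonneg {n : ℕ} (u : Fin n → ℝ) : 0 ≤ l2norm u := Real.sqrt_nonneg _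

lemma l2norm_mulVec_le {n d : ℕ} (A : Matrix (Fin n) (Fin d) ℝ) (v : Fin d → ℝ) :
    l2norm (A.mulVec v) ≤ specNorm A * l2norm v := by
  rw [l2norm_eq, l2norm_eq]
  have h := (LinearMap.toContinuousLinearMap (Matrix.toEuclideanLin A)).le_opNorm
      ((WithLp.equiv 2 (Fin d → ℝ)).symm v)
  have he : (LinearMap.toContinuousLinearMap (Matrix.toEuclideanLin A))
      ((WithLp.equiv 2 (Fin d → ℝ)).symm v)
      = (WithLp.equiv 2 (Fin n → ℝ)).symm (A.mulVec v) := rfl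
  rwa [he] at h

lemma abs_le_l2norm {n : ℕ} (u : Fin n → ℝ) (i : Fin n) : |u i| ≤ l2norm u := by
  rw [← Real.sqrt_sq_eq_abs]
  exact Real.sqrt_le_sqrt (Finset.single_le_sum (fun j _ => sq_nonneg (u j))
    (Finset.mem_univ i))

lemma exp_sub_exp_le (s t M : ℝ) (hs : s ≤ M) (ht : t ≤ M) :
    |Real.exp s - Real.exp t| ≤ Real.exp M * |s - t| := by
  wlog h : t ≤ s generalizing s t
  · rw [abs_sub_comm, abs_sub_comm s t]; exact this t s ht hs (le_of_not_ge h)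
  rw [abs_of_nonneg (sub_nonneg.2 (Real.exp_le_exp.2 h)), abs_of_nonneg (sub_nonneg.2 h)]
  have : Real.exp s - Real.exp t = Real.exp t * (Real.exp (s - t) - 1) := by
    rw [mul_sub, ← Real.exp_add, mul_one, show t + (s - t) = s by ring]
  rw [this]
  have key : Real.exp (s - t) * Real.exp (t - s) = 1 := by
    rw [← Real.exp_add]; norm_num
  have h1 : Real.exp (s - t) - 1 ≤ (s - t) * Real.exp (s - t) := by
    have h2 := mul_le_mul_of_nonneg_left (Real.add_one_le_exp (t - s)) (Real.exp_pos (s - t)).le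
    nlinarith [h2, key]
  calc Real.exp t * (Real.exp (s - t) - 1) ≤ Real.exp t * ((s - t) * Real.exp (s - t)) := by
        exact mul_le_mul_of_nonneg_left h1 (Real.exp_pos t).le
    _ = Real.exp t * Real.exp (s - t) * (s - t) := by ring
    _ = Real.exp s * (s - t) := by rw [← Real.exp_add, show t + (s - t) = s by ring]
    _ ≤ Real.exp M * (s - t) := mul_le_mul_of_nonneg_right (Real.exp_le_exp.2 hs)
        (sub_nonneg.2 h)

/-- ‖exp(Ax) − exp(Ay)‖₂ ≤ 2 √n R exp(R²) ‖x − y‖₂. -/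
theorem stmt_16 {n d : ℕ} (A : Matrix (Fin n) (Fin d) ℝ) (R : ℝ) (hR : 4 ≤ R)
    (hA : specNorm A ≤ R) (x y : Fin d → ℝ) (hx : l2norm x ≤ R) (hy : l2norm y ≤ R)
    (hxy : linfNorm (A.mulVec (x - y)) < 0.01) :
    l2norm ((fun i => Real.exp (A.mulVec x i)) - fun i => Real.exp (A.mulVec y i)) ≤
      2 * Real.sqrt n * R * Real.exp (R ^ 2) * l2norm (x - y) := by
  have hR0 : (0:ℝ) ≤ R := by linarith
  set a := A.mulVec x with ha
  set b := A.mulVec y with hb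
  -- pointwise bound on entries of a and b
  have hbound : ∀ i, a i ≤ R ^ 2 ∧ b i ≤ R ^ 2 := by
    intro i
    constructor
    · calc a i ≤ |a i| := le_abs_self _
        _ ≤ l2norm a := abs_le_l2norm a i
        _ ≤ specNorm A * l2norm x := l2norm_mulVec_le A x
        _ ≤ R * R := mul_le_mul hA hx (l2norm_nonneg x) hR0
        _ = R ^ 2 := (sq R).symm
    · calc b i ≤ |b i| := le_abs_self _
        _ ≤ l2norm b := abs_le_l2norm b i
        _ ≤ specNorm A * l2norm y := l2norm_mulVec_le A y
        _ ≤ R * R := mul_le_mul hA hy (l2norm_nonneg y) hR0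
        _ = R ^ 2 := (sq R).symm
  have hpt : ∀ i, ((fun i => Real.exp (a i)) - fun i => Real.exp (b i)) i ^ 2 ≤
      (Real.exp (R ^ 2)) ^ 2 * (A.mulVec (x - y) i) ^ 2 := by
    intro i
    have h1 := exp_sub_exp_le (a i) (b i) (R ^ 2) (hbound i).1 (hbound i).2
    have h2 : A.mulVec (x - y) i = a i - b i := by
      rw [Matrix.mulVec_sub]; rfl
    rw [h2]
    calc ((fun i => Real.exp (a i)) - fun i => Real.exp (b i)) i ^ 2
        = (Real.exp (a i) - Real.exp (b i)) ^ 2 := by simp [Pi.sub_apply]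
      _ ≤ (Real.exp (R ^ 2) * |a i - b i|) ^ 2 := by
          rw [← sq_abs (Real.exp (a i) - Real.exp (b i))]
          exact pow_le_pow_left₀ (abs_nonneg _) h1 2
      _ = (Real.exp (R ^ 2)) ^ 2 * (a i - b i) ^ 2 := by
          rw [mul_pow, sq_abs]
  have hsum : l2norm ((fun i => Real.exp (a i)) - fun i => Real.exp (b i)) ≤
      Real.exp (R ^ 2) * l2norm (A.mulVec (x - y)) := by
    rw [l2norm, l2norm, ← Real.sqrt_sq (Real.exp_pos (R ^ 2)).le, ← Real.sqrt_mul (sq_nonneg _),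
      Finset.mul_sum]
    exact Real.sqrt_le_sqrt (Finset.sum_le_sum fun i _ => hpt i)
  have hAv : l2norm (A.mulVec (x - y)) ≤ R * l2norm (x - y) :=
    le_trans (l2norm_mulVec_le A (x - y))
      (mul_le_mul_of_nonneg_right hA (l2norm_nonneg _))
  rcases Nat.eq_zero_or_pos n with hn | hn
  · subst hn
    have h0 : l2norm ((fun i => Real.exp (a i)) - fun i => Real.exp (b i)) = 0 := by
      simp [l2norm]
    rw [h0]
    norm_num
  · have h1 : (1:ℝ) ≤ 2 * Real.sqrt n := by
      have : (1:ℝ) ≤ Real.sqrt n := by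
        rw [show (1:ℝ) = Real.sqrt 1 by simp]
        exact Real.sqrt_le_sqrt (by exact_mod_cast hn)
      linarith
    calc l2norm ((fun i => Real.exp (a i)) - fun i => Real.exp (b i))
        ≤ Real.exp (R ^ 2) * (R * l2norm (x - y)) :=
          le_trans hsum (mul_le_mul_of_nonneg_left hAv (Real.exp_pos _).le)
      _ = 1 * R * Real.exp (R ^ 2) * l2norm (x - y) := by ring
      _ ≤ 2 * Real.sqrt n * R * Real.exp (R ^ 2) * l2norm (x - y) := by
          apply mul_le_mul_of_nonneg_right _ (l2norm_nonneg _)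
          apply mul_le_mul_of_nonneg_right _ (Real.exp_pos _).le
          exact mul_le_mul_of_nonneg_right h1 hR0
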